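/- arXiv:1512.07326 — 2 statements merged into one kernel-verified Lean document; each statement's English description precedes it below -/
import Mathlib

section
/- Let C(x,y) = (x, -ry), D(x,y) = (α - rβxy, -βxy), E(x,y) = (-α + r²βxy, -βxy), F(x,y) = (α - r³βxy, -βxy), with α, β > 0 and r > 0. Then for every (x,y) with x > 0, y > 0, the set of vectors {C(x,y), D(x,y), E(x,y), F(x,y)} spans ℝ². -/
/-- Cramer's rule in `K × K`. -/
lemma span_eq_top_of_cross_ne_zero {K : Type*} [Field K] {s : Set (K × K)} (u v : K × K)
    (hu : u ∈ s) (hv : v ∈ s) (h : u.1 * v.2 - u.2 * v.1 ≠ 0) :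
    Submodule.span K s = ⊤ := by
  refine top_unique fun w _ => Submodule.span_mono (Set.pair_subset hu hv) ?_
  rw [Submodule.mem_span_pair]
  refine ⟨(w.1 * v.2 - w.2 * v.1) / (u.1 * v.2 - u.2 * v.1),
    (w.2 * u.1 - w.1 * u.2) / (u.1 * v.2 - u.2 * v.1), ?_⟩
  ext <;> simp only [Prod.fst_add, Prod.snd_add, Prod.smul_fst, Prod.smul_snd, smul_eq_mul] <;>
    rw [div_mul_eq_mul_div, div_mul_eq_mul_div, ← add_div, div_eq_iff h] <;> ring

theorem hormander_vectors_span_general (α β r : ℝ) (hβ : 0 < β) (hr : 0 < r)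
    (x y : ℝ) (hx : 0 < x) (hy : 0 < y) :
    Submodule.span ℝ
      ({(x, -r * y), (α - r * β * x * y, -(β * x * y)),
        (-α + r ^ 2 * β * x * y, -(β * x * y)),
        (α - r ^ 3 * β * x * y, -(β * x * y))} : Set (ℝ × ℝ)) = ⊤ := by
  set C : ℝ × ℝ := (x, -r * y)
  set D : ℝ × ℝ := (α - r * β * x * y, -(β * x * y))
  set E : ℝ × ℝ := (-α + r ^ 2 * β * x * y, -(β * x * y))
  set F : ℝ × ℝ := (α - r ^ 3 * β * x * y, -(β * x * y))
  have hw : 0 < β * x * y := by positivity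
  rcases eq_or_ne r 1 with rfl | hr1
  · have hCDE : (C.1 * D.2 - C.2 * D.1) + (C.1 * E.2 - C.2 * E.1) = -2 * (β * x * y) * x := by
      simp only [C, D, E]; ring
    by_cases hCD : C.1 * D.2 - C.2 * D.1 = 0
    · refine span_eq_top_of_cross_ne_zero C E (by simp) (by simp) ?_
      intro hCE
      linarith [mul_pos hw hx]
    · exact span_eq_top_of_cross_ne_zero C D (by simp) (by simp) hCD
  · have hDF : D.1 * F.2 - D.2 * F.1 = (β * x * y) ^ 2 * (r * (1 - r) * (1 + r)) := by
      simp only [D, F]; ring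
    refine span_eq_top_of_cross_ne_zero D F (by simp) (by simp) (hDF ▸ ?_)
    have : 1 - r ≠ 0 := sub_ne_zero.mpr hr1.symm
    positivity

/-- The vectors `C, D, E, F` from the Hörmander-condition computation span `ℝ²` at every
point of the open positive quadrant. -/
theorem hormander_vectors_span (α β r : ℝ) (hα : 0 < α) (hβ : 0 < β) (hr : 0 < r)
    (x y : ℝ) (hx : 0 < x) (hy : 0 < y) :
    Submodule.span ℝ
      ({(x, -r * y), (α - r * β * x * y, -(β * x * y)),
        (-α + r ^ 2 * β * x * y, -(β * x * y)),
        (α - r ^ 3 * β * x * y, -(β * x * y))} : Set (ℝ × ℝ)) = ⊤ :=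
  hormander_vectors_span_general α β r hβ hr x y hx hy
end

section
/- Let L be the generator of the SDE dS = [α - βSI - μS]dt + σ₁S dB, dI = [βSI - (μ+ρ+γ)I]dt + σ₂I dB, and let 0 < p < min{2μ/σ₁², 2(μ+ρ+γ)/σ₂²}. Define U(u,v) = (u+v)^{1+p} + u^{-p/2}. Then there exist constants K₁ > 0 and K₂ > 0 such that LU(u,v) ≤ K₂ - K₁U(u,v) for all u, v > 0. -/
/-!
The condition on `p` makes the quadratic form
`(μ - pσ₁²/2) u² + (μ+ρ+γ - pσ₂²/2) v² + (2μ+ρ+γ - pσ₁σ₂) uv`, which enters `LU` with the factor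
`-(1+p)(u+v)^{p-1}`, at least `m (u+v)²` for some `m > 0`, so `LU` has the two leading negative terms `-(1+p) m (u+v)^{1+p}` and
`-(p/2) α u^{-p/2-1}`. Every other term, including the cross term `v u^{-p/2}` (Young's
inequality with exponents `1+p` and `(1+p)/p`), has lower order and is absorbed into these two at
the cost of an additive constant.
-/

open Real

/-- The Lyapunov function `U(u,v) = (u+v)^{1+p} + u^{-p/2}`. -/
noncomputable def Ufun (p u v : ℝ) : ℝ := (u + v) ^ (1 + p) + u ^ (-(p / 2))

/-- The generator of the degenerate SIR diffusion applied to `U`. -/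
noncomputable def LU (α β μ ρ γ σ₁ σ₂ p u v : ℝ) : ℝ :=
  (α - β * u * v - μ * u) * deriv (fun x => Ufun p x v) u
    + (β * u * v - (μ + ρ + γ) * v) * deriv (fun y => Ufun p u y) v
    + (1 / 2) * (σ₁ * u) ^ 2 * deriv (fun x => deriv (fun x' => Ufun p x' v) x) u
    + σ₁ * σ₂ * u * v * deriv (fun x => deriv (fun y => Ufun p x y) v) u
    + (1 / 2) * (σ₂ * v) ^ 2 * deriv (fun y => deriv (fun y' => Ufun p u y') y) v

theorem exists_mul_mul_le_mul_rpow_add_mul_rpow {q r A δ : ℝ} (hqr : q.HolderConjugate r)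
    (hA : 0 < A) (hδ : 0 < δ) :
    ∃ C, 0 < C ∧ ∀ x y : ℝ, 0 ≤ x → 0 ≤ y → A * x * y ≤ δ * x ^ q + C * y ^ r := by
  have hq := hqr.pos
  have hr := hqr.symm.pos
  set t := (q * δ) ^ q⁻¹
  have ht : 0 < t := by positivity
  have ht_pow : t ^ q = q * δ := by
    rw [← rpow_mul (by positivity), inv_mul_cancel₀ hq.ne', rpow_one]
  refine ⟨(A / t) ^ r / r, by positivity, fun x y hx hy => ?_⟩
  calc A * x * y = (t * x) * (A / t * y) := by field_simp
    _ ≤ (t * x) ^ q / q + (A / t * y) ^ r / r :=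
      young_inequality_of_nonneg (by positivity) (by positivity) hqr
    _ = δ * x ^ q + (A / t) ^ r / r * y ^ r := by
      rw [mul_rpow ht.le hx, mul_rpow (by positivity) hy, ht_pow]
      field_simp

theorem exists_mul_rpow_le_mul_rpow_add {a b A δ : ℝ} (ha : 0 < a) (hab : a < b)
    (hA : 0 < A) (hδ : 0 < δ) :
    ∃ C, 0 < C ∧ ∀ x : ℝ, 0 ≤ x → A * x ^ a ≤ δ * x ^ b + C := by
  have hb : 0 < b := ha.trans hab
  have hqr : (b / a).HolderConjugate (b / (b - a)) := by
    simpa using holderConjugate_one_div (a := a / b) (b := (b - a) / b)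
      (by positivity) (div_pos (sub_pos.2 hab) hb) (by field_simp; ring)
  obtain ⟨C, hC, hY⟩ := exists_mul_mul_le_mul_rpow_add_mul_rpow hqr hA hδ
  refine ⟨C, hC, fun x hx => ?_⟩
  simpa [← rpow_mul hx, mul_div_cancel₀ _ ha.ne'] using hY (x ^ a) 1 (rpow_nonneg hx a) zero_le_one

theorem exists_mul_rpow_neg_le_mul_rpow_neg_add {a b A δ : ℝ} (ha : 0 < a) (hab : a < b)
    (hA : 0 < A) (hδ : 0 < δ) :
    ∃ C, 0 < C ∧ ∀ x : ℝ, 0 < x → A * x ^ (-a) ≤ δ * x ^ (-b) + C := by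
  obtain ⟨C, hC, h⟩ := exists_mul_rpow_le_mul_rpow_add ha hab hA hδ
  exact ⟨C, hC, fun x hx => by
    simpa only [inv_rpow hx.le, rpow_neg hx.le] using h x⁻¹ (inv_nonneg.2 hx.le)⟩

theorem exists_mul_mul_rpow_neg_le {p A δ ε : ℝ} (hp : 0 < p) (hA : 0 < A) (hδ : 0 < δ)
    (hε : 0 < ε) :
    ∃ C, 0 < C ∧ ∀ u v : ℝ, 0 < u → 0 ≤ v →
      A * v * u ^ (-(p / 2)) ≤ δ * v ^ (1 + p) + ε * u ^ (-(p / 2 + 1)) + C := by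
  have hY : (1 + p).HolderConjugate ((1 + p) / p) :=
    holderConjugate_iff.2 ⟨by linarith, by field_simp⟩
  obtain ⟨Cy, hCy, hy⟩ := exists_mul_mul_le_mul_rpow_add_mul_rpow hY hA hδ
  obtain ⟨C, hC, hw⟩ := exists_mul_rpow_neg_le_mul_rpow_neg_add
    (by positivity : 0 < (1 + p) / 2) (by linarith : (1 + p) / 2 < p / 2 + 1) hCy hε
  refine ⟨C, hC, fun u v hu hv => ?_⟩
  have hpow : (u ^ (-(p / 2))) ^ ((1 + p) / p) = u ^ (-((1 + p) / 2)) := by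
    rw [← rpow_mul hu.le]; congr 1; field_simp
  have hyv := hy v (u ^ (-(p / 2))) hv (by positivity)
  rw [hpow] at hyv
  linarith [hw u hu]

section Derivatives

variable {p : ℝ}

theorem hasDerivAt_Ufun_left (v : ℝ) {x : ℝ} (hx : 0 < x) (hxv : 0 < x + v) :
    HasDerivAt (fun x => Ufun p x v) ((1 + p) * (x + v) ^ p - p / 2 * x ^ (-(p / 2 + 1))) x :=
  ((((hasDerivAt_id x).add_const v).rpow_const (p := 1 + p) (Or.inl hxv.ne')).add
    (hasDerivAt_rpow_const (p := -(p / 2)) (Or.inl hx.ne'))).congr_deriv (by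
      rw [add_sub_cancel_left, show -(p / 2) - 1 = -(p / 2 + 1) by ring, id]
      ring)

theorem hasDerivAt_Ufun_right (u : ℝ) {y : ℝ} (huy : 0 < u + y) :
    HasDerivAt (fun y => Ufun p u y) ((1 + p) * (u + y) ^ p) y :=
  ((((hasDerivAt_id y).const_add u).rpow_const (p := 1 + p) (Or.inl huy.ne')).add_const
    (u ^ (-(p / 2)))).congr_deriv (by rw [add_sub_cancel_left, id, one_mul])

theorem deriv_deriv_Ufun_left {u v : ℝ} (hu : 0 < u) (hv : 0 < v) :
    deriv (fun x => deriv (fun x' => Ufun p x' v) x) u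
      = (1 + p) * p * (u + v) ^ (p - 1) + p / 2 * (p / 2 + 1) * u ^ (-(p / 2 + 2)) := by
  have h : HasDerivAt (fun x => (1 + p) * (x + v) ^ p - p / 2 * x ^ (-(p / 2 + 1)))
      ((1 + p) * p * (u + v) ^ (p - 1) + p / 2 * (p / 2 + 1) * u ^ (-(p / 2 + 2))) u :=
    (((((hasDerivAt_id u).add_const v).rpow_const (p := p)
      (Or.inl (add_pos hu hv).ne')).const_mul (1 + p)).sub
      ((hasDerivAt_rpow_const (p := -(p / 2 + 1)) (Or.inl hu.ne')).const_mul (p / 2))).congr_deriv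
      (by rw [show -(p / 2 + 1) - 1 = -(p / 2 + 2) by ring, id]; ring)
  refine (h.congr_of_eventuallyEq ?_).deriv
  filter_upwards [Ioi_mem_nhds hu] with x hx
  exact (hasDerivAt_Ufun_left v hx (add_pos hx hv)).deriv

theorem deriv_deriv_Ufun_right {u v : ℝ} (hu : 0 < u) (hv : 0 < v) :
    deriv (fun y => deriv (fun y' => Ufun p u y') y) v = (1 + p) * p * (u + v) ^ (p - 1) := by
  have h : HasDerivAt (fun y => (1 + p) * (u + y) ^ p) ((1 + p) * p * (u + v) ^ (p - 1)) v :=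
    ((((hasDerivAt_id v).const_add u).rpow_const (p := p)
      (Or.inl (add_pos hu hv).ne')).const_mul (1 + p)).congr_deriv (by rw [id]; ring)
  refine (h.congr_of_eventuallyEq ?_).deriv
  filter_upwards [Ioi_mem_nhds hv] with y hy
  exact (hasDerivAt_Ufun_right u (add_pos hu hy)).deriv

theorem deriv_deriv_Ufun_left_right {u v : ℝ} (hu : 0 < u) (hv : 0 < v) :
    deriv (fun x => deriv (fun y => Ufun p x y) v) u = (1 + p) * p * (u + v) ^ (p - 1) := by
  have h : HasDerivAt (fun x => (1 + p) * (x + v) ^ p) ((1 + p) * p * (u + v) ^ (p - 1)) u :=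
    ((((hasDerivAt_id u).add_const v).rpow_const (p := p)
      (Or.inl (add_pos hu hv).ne')).const_mul (1 + p)).congr_deriv (by rw [id]; ring)
  refine (h.congr_of_eventuallyEq ?_).deriv
  filter_upwards [Ioi_mem_nhds hu] with x hx
  exact (hasDerivAt_Ufun_right x (add_pos hx hv)).deriv

end Derivatives

theorem LU_eq (α β μ ρ γ σ₁ σ₂ : ℝ) {p u v : ℝ} (hu : 0 < u) (hv : 0 < v) :
    LU α β μ ρ γ σ₁ σ₂ p u v =
      (1 + p) * (u + v) ^ (p - 1) *
        (α * (u + v) - (μ - p * σ₁ ^ 2 / 2) * u ^ 2 - (μ + ρ + γ - p * σ₂ ^ 2 / 2) * v ^ 2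
          - (2 * μ + ρ + γ - p * σ₁ * σ₂) * (u * v))
      + p / 2 * (β * v + μ + (p / 2 + 1) * σ₁ ^ 2 / 2) * u ^ (-(p / 2))
      - p / 2 * α * u ^ (-(p / 2 + 1)) := by
  have hs : 0 < u + v := add_pos hu hv
  rw [LU, (hasDerivAt_Ufun_left v hu hs).deriv, (hasDerivAt_Ufun_right u hs).deriv,
    deriv_deriv_Ufun_left hu hv, deriv_deriv_Ufun_right hu hv, deriv_deriv_Ufun_left_right hu hv,
    show -(p / 2 + 2) = -(p / 2) - 2 by ring, show -(p / 2 + 1) = -(p / 2) - 1 by ring]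
  simp only [rpow_sub hu, rpow_sub hs, rpow_one, rpow_two]
  field_simp
  ring

theorem LU_le {α β μ ρ γ σ₁ σ₂ p m u v : ℝ} (hp : 0 ≤ p) (hm₁ : m ≤ μ - p * σ₁ ^ 2 / 2)
    (hm₂ : m ≤ μ + ρ + γ - p * σ₂ ^ 2 / 2) (hu : 0 < u) (hv : 0 < v) :
    LU α β μ ρ γ σ₁ σ₂ p u v ≤
      (1 + p) * α * (u + v) ^ p - (1 + p) * m * (u + v) ^ (1 + p)
      + p / 2 * β * v * u ^ (-(p / 2))
      + p / 2 * (μ + (p / 2 + 1) * σ₁ ^ 2 / 2) * u ^ (-(p / 2))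
      - p / 2 * α * u ^ (-(p / 2 + 1)) := by
  have hs : 0 < u + v := add_pos hu hv
  -- the coefficient of `uv` is at least the sum of those of `u²` and `v²`, as `2σ₁σ₂ ≤ σ₁² + σ₂²`
  have hquad : α * (u + v) - (μ - p * σ₁ ^ 2 / 2) * u ^ 2 - (μ + ρ + γ - p * σ₂ ^ 2 / 2) * v ^ 2
      - (2 * μ + ρ + γ - p * σ₁ * σ₂) * (u * v) ≤ α * (u + v) - m * (u + v) ^ 2 := by
    nlinarith [mul_nonneg hp (sq_nonneg (σ₁ - σ₂)), mul_pos hu hv, sq_nonneg u, sq_nonneg v]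
  have hpow : (u + v) ^ (p - 1) * (u + v) = (u + v) ^ p := by
    rw [rpow_sub_one hs.ne', div_mul_cancel₀ _ hs.ne']
  have hpow' : (u + v) ^ p * (u + v) = (u + v) ^ (1 + p) := by
    rw [add_comm 1 p, rpow_add_one hs.ne']
  rw [LU_eq α β μ ρ γ σ₁ σ₂ hu hv]
  have := mul_le_mul_of_nonneg_left hquad (by positivity : 0 ≤ (1 + p) * (u + v) ^ (p - 1))
  linear_combination this + (1 + p) * (α - m * (u + v)) * hpow - (1 + p) * m * hpow'

theorem sub_mul_sq_div_two_pos {c p σ : ℝ} (hσ : σ ≠ 0) (h : p < 2 * c / σ ^ 2) :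
    0 < c - p * σ ^ 2 / 2 := by
  rw [lt_div_iff₀ (by positivity)] at h
  linarith

theorem generator_lyapunov_bound_general (α β μ ρ γ σ₁ σ₂ p : ℝ)
    (hα : 0 < α) (hβ : 0 < β) (hμ : 0 < μ)
    (hσ₁ : σ₁ ≠ 0) (hσ₂ : σ₂ ≠ 0)
    (hp : 0 < p) (hp₁ : p < 2 * μ / σ₁ ^ 2) (hp₂ : p < 2 * (μ + ρ + γ) / σ₂ ^ 2) :
    ∃ K₁ : ℝ, 0 < K₁ ∧ ∃ K₂ : ℝ, 0 < K₂ ∧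
      ∀ u v : ℝ, 0 < u → 0 < v →
        LU α β μ ρ γ σ₁ σ₂ p u v ≤ K₂ - K₁ * Ufun p u v := by
  obtain ⟨m, hm, hm₁, hm₂⟩ : ∃ m, 0 < m ∧ m ≤ μ - p * σ₁ ^ 2 / 2 ∧ m ≤ μ + ρ + γ - p * σ₂ ^ 2 / 2 :=
    ⟨_, lt_min (sub_mul_sq_div_two_pos hσ₁ hp₁) (sub_mul_sq_div_two_pos hσ₂ (by linarith)),
      min_le_left _ _, min_le_right _ _⟩
  obtain ⟨K₁, hK₁, hmK⟩ : ∃ K₁, 0 < K₁ ∧ (1 + p) * m = 4 * K₁ :=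
    ⟨(1 + p) * m / 4, by positivity, by ring⟩
  obtain ⟨Cs, hCs, hs⟩ := exists_mul_rpow_le_mul_rpow_add hp (by linarith : p < 1 + p)
    (by positivity : 0 < (1 + p) * α) hK₁
  obtain ⟨Cy, hCy, hy⟩ := exists_mul_mul_rpow_neg_le hp (by positivity : 0 < p / 2 * β) hK₁
    (by positivity : 0 < p * α / 4)
  obtain ⟨Cz, hCz, hz⟩ := exists_mul_rpow_neg_le_mul_rpow_neg_add
    (by positivity : 0 < p / 2) (by linarith : p / 2 < p / 2 + 1)
    (by positivity : 0 < p / 2 * (μ + (p / 2 + 1) * σ₁ ^ 2 / 2) + K₁)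
    (by positivity : 0 < p * α / 4)
  refine ⟨K₁, hK₁, Cs + Cy + Cz, by positivity, fun u v hu hv => ?_⟩
  have hvs : K₁ * v ^ (1 + p) ≤ K₁ * (u + v) ^ (1 + p) :=
    mul_le_mul_of_nonneg_left (rpow_le_rpow hv.le (by linarith) (by linarith)) hK₁.le
  have hS : 0 ≤ K₁ * (u + v) ^ (1 + p) := by positivity
  have hLU := LU_le (α := α) (β := β) hp.le hm₁ hm₂ hu hv
  rw [hmK] at hLU
  rw [Ufun]
  linear_combination hLU + hs (u + v) (by positivity) + hy u v hu hv.le + hvs + hz u hu + hS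

/-- Lyapunov drift condition: for `0 < p < min{2μ/σ₁², 2(μ+ρ+γ)/σ₂²}` there exist
`K₁, K₂ > 0` with `LU(u,v) ≤ K₂ - K₁ U(u,v)` for all `u, v > 0`. -/
theorem generator_lyapunov_bound (α β μ ρ γ σ₁ σ₂ p : ℝ)
    (hα : 0 < α) (hβ : 0 < β) (hμ : 0 < μ) (hρ : 0 < ρ) (hγ : 0 < γ)
    (hσ₁ : σ₁ ≠ 0) (hσ₂ : σ₂ ≠ 0)
    (hp : 0 < p) (hp₁ : p < 2 * μ / σ₁ ^ 2) (hp₂ : p < 2 * (μ + ρ + γ) / σ₂ ^ 2) :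
    ∃ K₁ : ℝ, 0 < K₁ ∧ ∃ K₂ : ℝ, 0 < K₂ ∧
      ∀ u v : ℝ, 0 < u → 0 < v →
        LU α β μ ρ γ σ₁ σ₂ p u v ≤ K₂ - K₁ * Ufun p u v :=
  generator_lyapunov_bound_general α β μ ρ γ σ₁ σ₂ p hα hβ hμ hσ₁ hσ₂ hp hp₁ hp₂
end
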